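/- arXiv:1806.02617 — 2 statements merged into one kernel-verified Lean document; each statement's English description precedes it below -/
import Mathlib

section
/- Let U : ℝ^d → ℝ be differentiable with L-Lipschitz gradient and global minimizer θ* = 0, β > 0 with Z_β = ∫ exp(-βU) < ∞, and suppose the Gibbs measure π_θ ∝ exp(-βU) has second moment ∫‖θ‖² dπ_θ ≤ C_β/β where C_β is a constant independent of β (with C_β ≥ d e/L). Then Ū_β - U(θ*) = O(1/β) as β → ∞; more precisely, β(Ū_β - U(θ*)) ≤ (d/2) log(e C_β L / d) for all β > 0. -/
open Real MeasureTheory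
open scoped RealInnerProductSpace

/-!
Gibbs' inequality compares the entropy `β Ū_β + log Z_β` of the Gibbs density with its cross
entropy against the Gaussian `exp (-a‖θ‖²)`, `a = d β / (2 C_β)`; by the moment bound the latter
is at most `a C_β / β + (d/2) log (π/a) = d/2 + (d/2) log (π/a)`. On the other side, the gradient
vanishes at the minimiser, so the descent lemma gives `U θ ≤ U 0 + (L/2)‖θ‖²` and hence
`log Z_β ≥ -β U 0 + (d/2) log (2π / (β L))`. Subtracting, the factors of `π` cancel and what is
left is `(d/2) (1 + log (C_β L / d))`.
-/

section Descent

variable {E : Type*} [NormedAddCommGroup E] [InnerProductSpace ℝ E] [CompleteSpace E]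
  {U : E → ℝ} {L : ℝ}

theorem le_add_inner_gradient_add_sq_norm_of_lipschitz_gradient (hU : Differentiable ℝ U)
    (hlip : ∀ x y, ‖gradient U x - gradient U y‖ ≤ L * ‖x - y‖) (x y : E) :
    U y ≤ U x + ⟪gradient U x, y - x⟫ + L / 2 * ‖y - x‖ ^ 2 := by
  set v := y - x
  let φ : ℝ → ℝ := fun t ↦
    U (x + t • v) - t * ⟪gradient U x, v⟫ - L / 2 * t ^ 2 * ‖v‖ ^ 2
  have hφ (t : ℝ) :
      HasDerivAt φ (⟪gradient U (x + t • v) - gradient U x, v⟫ - L * t * ‖v‖ ^ 2) t := by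
    have hline : HasDerivAt (fun t : ℝ ↦ x + t • v) v t := by
      simpa using ((hasDerivAt_id t).smul_const v).const_add x
    have hUline := (hU (x + t • v)).hasGradientAt.hasFDerivAt.comp_hasDerivAt t hline
    refine ((hUline.sub ((hasDerivAt_id t).mul_const ⟪gradient U x, v⟫)).sub
      (((hasDerivAt_pow 2 t).const_mul (L / 2)).mul_const (‖v‖ ^ 2))).congr_deriv ?_
    simp only [InnerProductSpace.toDual_apply_apply, inner_sub_left]
    ring
  have hφ_nonpos (t : ℝ) (ht : 0 < t) :
      ⟪gradient U (x + t • v) - gradient U x, v⟫ - L * t * ‖v‖ ^ 2 ≤ 0 := by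
    refine sub_nonpos.2 ?_
    calc ⟪gradient U (x + t • v) - gradient U x, v⟫
        ≤ ‖gradient U (x + t • v) - gradient U x‖ * ‖v‖ := real_inner_le_norm _ _
      _ ≤ L * ‖t • v‖ * ‖v‖ := by
          gcongr
          simpa using hlip (x + t • v) x
      _ = L * t * ‖v‖ ^ 2 := by rw [norm_smul, norm_of_nonneg ht.le]; ring
  have hanti : AntitoneOn φ (Set.Ici 0) :=
    antitoneOn_of_hasDerivWithinAt_nonpos (convex_Ici 0)
      (fun t _ ↦ (hφ t).continuousAt.continuousWithinAt)
      (fun t _ ↦ (hφ t).hasDerivWithinAt)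
      (fun t ht ↦ hφ_nonpos t (by simpa using ht))
  have h₀ : x + (0 : ℝ) • v = x := by simp
  have h₁ : x + (1 : ℝ) • v = y := by simp [v]
  have := hanti Set.self_mem_Ici (Set.mem_Ici.2 zero_le_one) zero_le_one
  simp only [φ, h₀, h₁] at this
  linarith

theorem le_add_sq_norm_of_lipschitz_gradient_of_forall_le (hU : Differentiable ℝ U)
    (hlip : ∀ x y, ‖gradient U x - gradient U y‖ ≤ L * ‖x - y‖) {x₀ : E}
    (hmin : ∀ x, U x₀ ≤ U x) (x : E) :
    U x ≤ U x₀ + L / 2 * ‖x - x₀‖ ^ 2 := by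
  have hgrad : gradient U x₀ = 0 := by
    simp [gradient, IsLocalMin.fderiv_eq_zero (Filter.Eventually.of_forall hmin)]
  simpa [hgrad] using le_add_inner_gradient_add_sq_norm_of_lipschitz_gradient hU hlip x₀ x

end Descent

section Gibbs

variable {α : Type*} [MeasurableSpace α]

noncomputable def partitionFunction (μ : Measure α) (β : ℝ) (U : α → ℝ) : ℝ :=
  ∫ x, exp (-(β * U x)) ∂μ

noncomputable def gibbsDensity (μ : Measure α) (β : ℝ) (U : α → ℝ) (x : α) : ℝ :=
  exp (-(β * U x)) / partitionFunction μ β U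

variable {μ : Measure α} {β : ℝ} {U : α → ℝ}

theorem integrable_gibbsDensity (hU : Integrable (fun x ↦ exp (-(β * U x))) μ) :
    Integrable (gibbsDensity μ β U) μ :=
  hU.div_const _

variable [NeZero μ]

theorem partitionFunction_pos (hU : Integrable (fun x ↦ exp (-(β * U x))) μ) :
    0 < partitionFunction μ β U :=
  integral_exp_pos hU

theorem gibbsDensity_pos (hU : Integrable (fun x ↦ exp (-(β * U x))) μ) (x : α) :
    0 < gibbsDensity μ β U x :=
  div_pos (exp_pos _) (partitionFunction_pos hU)

theorem log_gibbsDensity (hU : Integrable (fun x ↦ exp (-(β * U x))) μ) (x : α) :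
    log (gibbsDensity μ β U x) = -(β * U x) - log (partitionFunction μ β U) := by
  rw [gibbsDensity, log_div (exp_ne_zero _) (partitionFunction_pos hU).ne', log_exp]

theorem integral_gibbsDensity (hU : Integrable (fun x ↦ exp (-(β * U x))) μ) :
    ∫ x, gibbsDensity μ β U x ∂μ = 1 := by
  unfold gibbsDensity
  rw [integral_div]
  exact div_self (partitionFunction_pos hU).ne'

/-- The two sides are the entropy of `ρ = gibbsDensity μ β U` and its cross entropy relative to
`gibbsDensity μ β' U'`. -/
theorem gibbs_inequality {β' : ℝ} {U' : α → ℝ} (hU : Integrable (fun x ↦ exp (-(β * U x))) μ)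
    (hU' : Integrable (fun x ↦ exp (-(β' * U' x))) μ)
    (hUρ : Integrable (fun x ↦ U x * gibbsDensity μ β U x) μ)
    (hU'ρ : Integrable (fun x ↦ U' x * gibbsDensity μ β U x) μ) :
    β * ∫ x, U x * gibbsDensity μ β U x ∂μ + log (partitionFunction μ β U) ≤
      β' * ∫ x, U' x * gibbsDensity μ β U x ∂μ + log (partitionFunction μ β' U') := by
  set ρ := gibbsDensity μ β U
  set q := gibbsDensity μ β' U'
  set c := log (partitionFunction μ β U) - log (partitionFunction μ β' U')
  have hpointwise (x : α) :
      β * (U x * ρ x) - β' * (U' x * ρ x) + c * ρ x ≤ q x - ρ x := by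
    have hρ : 0 < ρ x := gibbsDensity_pos hU x
    have hq : 0 < q x := gibbsDensity_pos hU' x
    have hlogρ : log (ρ x) = -(β * U x) - log (partitionFunction μ β U) :=
      log_gibbsDensity hU x
    have hlogq : log (q x) = -(β' * U' x) - log (partitionFunction μ β' U') :=
      log_gibbsDensity hU' x
    have hlog := log_le_sub_one_of_pos (div_pos hq hρ)
    rw [log_div hq.ne' hρ.ne', hlogρ, hlogq] at hlog
    calc β * (U x * ρ x) - β' * (U' x * ρ x) + c * ρ x
        = ρ x * (-(β' * U' x) - log (partitionFunction μ β' U') -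
            (-(β * U x) - log (partitionFunction μ β U))) := by simp only [c]; ring
      _ ≤ ρ x * (q x / ρ x - 1) := mul_le_mul_of_nonneg_left hlog hρ.le
      _ = q x - ρ x := by field_simp
  have hρ := integrable_gibbsDensity hU
  have hq := integrable_gibbsDensity hU'
  have hUU' : Integrable (fun x ↦ β * (U x * ρ x) - β' * (U' x * ρ x)) μ :=
    (hUρ.const_mul β).sub (hU'ρ.const_mul β')
  have hint := integral_mono
    (f := fun x ↦ β * (U x * ρ x) - β' * (U' x * ρ x) + c * ρ x) (g := fun x ↦ q x - ρ x)
    (hUU'.add (hρ.const_mul c)) (hq.sub hρ) hpointwise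
  rw [integral_add hUU' (hρ.const_mul c), integral_sub (hUρ.const_mul β) (hU'ρ.const_mul β'),
    integral_sub hq hρ, integral_const_mul, integral_const_mul, integral_const_mul,
    integral_gibbsDensity hU, integral_gibbsDensity hU'] at hint
  linarith

end Gibbs

section Gaussian

variable {V : Type*} [NormedAddCommGroup V] [InnerProductSpace ℝ V] [FiniteDimensional ℝ V]
  [MeasurableSpace V] [BorelSpace V] {b : ℝ}

theorem partitionFunction_sq_norm (hb : 0 < b) :
    partitionFunction volume b (fun x : V ↦ ‖x‖ ^ 2) =
      (π / b) ^ (Module.finrank ℝ V / 2 : ℝ) := by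
  simpa [partitionFunction, neg_mul] using
    GaussianFourier.integral_rexp_neg_mul_sq_norm (V := V) hb

theorem integrable_exp_neg_mul_sq_norm (hb : 0 < b) :
    Integrable (fun x : V ↦ exp (-(b * ‖x‖ ^ 2))) :=
  .of_integral_ne_zero <| by
    rw [← partitionFunction, partitionFunction_sq_norm hb]
    exact (rpow_pos_of_pos (by positivity) _).ne'

theorem log_partitionFunction_sq_norm (hb : 0 < b) :
    log (partitionFunction volume b (fun x : V ↦ ‖x‖ ^ 2)) =
      Module.finrank ℝ V / 2 * log (π / b) := by
  rw [partitionFunction_sq_norm hb, log_rpow (by positivity)]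

theorem log_partitionFunction_ge_of_le_add_sq_norm {β c : ℝ} {U : V → ℝ} {x₀ : V} (hβ : 0 < β)
    (hb : 0 < b) (hU : Integrable (fun x ↦ exp (-(β * U x))))
    (hUle : ∀ x, U x ≤ c + b * ‖x - x₀‖ ^ 2) :
    -(β * c) + Module.finrank ℝ V / 2 * log (π / (β * b)) ≤
      log (partitionFunction volume β U) := by
  have hβb : 0 < β * b := mul_pos hβ hb
  have hZ := partitionFunction_pos (integrable_exp_neg_mul_sq_norm (V := V) hβb)
  have hgauss : Integrable (fun x ↦ exp (-(β * c)) * exp (-(β * b * ‖x - x₀‖ ^ 2))) :=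
    ((integrable_exp_neg_mul_sq_norm hβb).comp_sub_right x₀).const_mul _
  have hle := integral_mono hgauss hU fun x ↦ by
    rw [← exp_add]
    gcongr
    nlinarith [hUle x]
  rw [integral_const_mul, integral_sub_right_eq_self (fun x ↦ exp (-(β * b * ‖x‖ ^ 2))),
    ← partitionFunction, ← partitionFunction] at hle
  have := log_le_log (mul_pos (exp_pos _) hZ) hle
  rwa [log_mul (exp_ne_zero _) hZ.ne', log_exp, log_partitionFunction_sq_norm hβb] at this

end Gaussian

/-- Uniform-in-β form of Lemma 2: β(Ū_β - U(θ*)) ≤ (d/2) log(e C_β L / d)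
for all β > 0, so Ū_β - U* = O(1/β). -/
theorem stmt_7 {d : ℕ} (hd : 0 < d) (U : EuclideanSpace ℝ (Fin d) → ℝ)
    (L Cβ : ℝ) (hL : 0 < L)
    (hCβ : (d : ℝ) * Real.exp 1 / L ≤ Cβ)
    (hdiff : Differentiable ℝ U)
    (hlip : ∀ θ θ' : EuclideanSpace ℝ (Fin d),
      ‖gradient U θ - gradient U θ'‖ ≤ L * ‖θ - θ'‖)
    (hmin : ∀ θ, U (0 : EuclideanSpace ℝ (Fin d)) ≤ U θ) :
    ∀ β : ℝ, 0 < β →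
    ∀ ρ : EuclideanSpace ℝ (Fin d) → ℝ,
      (∀ θ, ρ θ = Real.exp (-(β * U θ)) /
        ∫ θ' : EuclideanSpace ℝ (Fin d), Real.exp (-(β * U θ'))) →
      Integrable (fun θ : EuclideanSpace ℝ (Fin d) => Real.exp (-(β * U θ))) →
      Integrable (fun θ : EuclideanSpace ℝ (Fin d) => U θ * ρ θ) →
      Integrable (fun θ : EuclideanSpace ℝ (Fin d) => ‖θ‖ ^ 2 * ρ θ) →
      (∫ θ : EuclideanSpace ℝ (Fin d), ‖θ‖ ^ 2 * ρ θ) ≤ Cβ / β →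
      β * ((∫ θ : EuclideanSpace ℝ (Fin d), U θ * ρ θ) -
          U (0 : EuclideanSpace ℝ (Fin d))) ≤
        (d : ℝ) / 2 * Real.log (Real.exp 1 * Cβ * L / d) := by
  intro β hβ ρ hρ hexp hUρ hnρ hmom
  obtain rfl : ρ = gibbsDensity volume β U := funext hρ
  have hd' : (0 : ℝ) < d := Nat.cast_pos.2 hd
  have hCβ_pos : 0 < Cβ := lt_of_lt_of_le (by positivity) hCβ
  -- the reference Gaussian `exp (-a‖θ‖²)` has second moment `d / (2a) = Cβ / β`
  set a := d * β / (2 * Cβ) with ha_def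
  have ha : 0 < a := by positivity
  have hentropy := gibbs_inequality (U' := fun θ ↦ ‖θ‖ ^ 2) hexp
    (integrable_exp_neg_mul_sq_norm ha) hUρ hnρ
  have hZ := log_partitionFunction_ge_of_le_add_sq_norm hβ (half_pos hL) hexp
    (le_add_sq_norm_of_lipschitz_gradient_of_forall_le hdiff hlip hmin)
  rw [log_partitionFunction_sq_norm ha, finrank_euclideanSpace_fin] at hentropy
  rw [finrank_euclideanSpace_fin] at hZ
  have haM : a * ∫ θ, ‖θ‖ ^ 2 * gibbsDensity volume β U θ ≤ d / 2 :=
    calc _ ≤ a * (Cβ / β) := mul_le_mul_of_nonneg_left hmom ha.le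
      _ = d / 2 := by rw [ha_def]; field_simp
  have hlog : log (exp 1 * Cβ * L / d) = 1 + (log (π / a) - log (π / (β * (L / 2)))) := by
    rw [← log_div (by positivity) (by positivity), ← log_exp 1,
      ← log_mul (by positivity) (by positivity), log_exp, ha_def]
    congr 1
    field_simp
  rw [hlog]
  linarith
end

section
/- Let (X_n) be a sequence in ℝ^m, h > 0, and suppose for each n there is a linear operator relation E[ψ(X_n) | X_{n-1}] = ψ(X_{n-1}) + h·L̃_n ψ(X_{n-1}) + R_n with |R_n| ≤ C h² uniformly, and L̃_n ψ = L_n ψ - ΔV_n ψ where L_n ψ(X_{n-1}) = U(θ_{n-1}ᶜ) - Ū (Poisson equation, with θᶜ the θ-component). Then |E[(1/N)Σ_{n=1}^N (U(θ_n) - Ū)]| ≤ |E ψ(X_N) - ψ(X_0)|/(Nh) + (1/N)|Σ_{n=1}^N E[ΔV_n ψ(X_{n-1})]| + C h. -/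
open MeasureTheory Finset

/-- Poisson-equation / telescoping decomposition of the ergodic bias
(core of Lemma 1).  ψ is a solution of the Poisson equation
L_n ψ(X_{n-1}) = U(θ_n) - Ū (φ denotes x ↦ U of the θ-component of x),
the one-step weak expansion E[ψ(X_n)] = E[ψ(X_{n-1}) + h(L_nψ - ΔV_nψ)(X_{n-1})] + R_n
holds with |R_n| ≤ Ch², and the conclusion is the ergodic bias bound. -/
theorem stmt_8 {Ω E : Type*} [MeasurableSpace Ω]
    (μ : Measure Ω) [IsProbabilityMeasure μ]
    (X : ℕ → Ω → E) (ψ φ : E → ℝ) (Lψ ΔVψ : ℕ → E → ℝ)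
    (R : ℕ → ℝ) (Ub C h : ℝ) (N : ℕ)
    (hN : 1 ≤ N) (hh : 0 < h) (hC : 0 ≤ C)
    (hint_ψ : ∀ n, Integrable (fun ω => ψ (X n ω)) μ)
    (hint_L : ∀ n, Integrable (fun ω => Lψ n (X (n - 1) ω)) μ)
    (hint_V : ∀ n, Integrable (fun ω => ΔVψ n (X (n - 1) ω)) μ)
    (hstep : ∀ n ∈ Finset.Icc 1 N,
      (∫ ω, ψ (X n ω) ∂μ) =
        (∫ ω, (ψ (X (n - 1) ω) +
          h * (Lψ n (X (n - 1) ω) - ΔVψ n (X (n - 1) ω))) ∂μ) + R n)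
    (hR : ∀ n ∈ Finset.Icc 1 N, |R n| ≤ C * h ^ 2)
    (hpoisson : ∀ n ∈ Finset.Icc 1 N, ∀ ω, Lψ n (X (n - 1) ω) = φ (X n ω) - Ub) :
    |∫ ω, (1 / (N : ℝ)) * ∑ n ∈ Finset.Icc 1 N, (φ (X n ω) - Ub) ∂μ| ≤
      |(∫ ω, ψ (X N ω) ∂μ) - ∫ ω, ψ (X 0 ω) ∂μ| / (N * h) +
        (1 / (N : ℝ)) * |∑ n ∈ Finset.Icc 1 N, ∫ ω, ΔVψ n (X (n - 1) ω) ∂μ| +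
        C * h := by
  set a : ℕ → ℝ := fun n => ∫ ω, ψ (X n ω) ∂μ with ha
  set l : ℕ → ℝ := fun n => ∫ ω, Lψ n (X (n - 1) ω) ∂μ with hl
  set v : ℕ → ℝ := fun n => ∫ ω, ΔVψ n (X (n - 1) ω) ∂μ with hv
  have hNpos : (0:ℝ) < N := by exact_mod_cast hN
  -- rewrite LHS
  have hLHS : (∫ ω, (1 / (N : ℝ)) * ∑ n ∈ Finset.Icc 1 N, (φ (X n ω) - Ub) ∂μ)
      = (1 / (N : ℝ)) * ∑ n ∈ Finset.Icc 1 N, l n := by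
    have : (fun ω => (1 / (N : ℝ)) * ∑ n ∈ Finset.Icc 1 N, (φ (X n ω) - Ub))
        = fun ω => (1 / (N : ℝ)) * ∑ n ∈ Finset.Icc 1 N, Lψ n (X (n - 1) ω) := by
      funext ω
      congr 1
      exact Finset.sum_congr rfl fun n hn => (hpoisson n hn ω).symm
    rw [this, integral_const_mul, integral_finset_sum _ fun n _ => hint_L n]
  have key : ∀ n ∈ Finset.Icc 1 N, a n - a (n - 1) = h * (l n - v n) + R n := by
    intro n hn
    have h1 := hstep n hn
    have hint2 : Integrable
        (fun ω => h * (Lψ n (X (n - 1) ω) - ΔVψ n (X (n - 1) ω))) μ :=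
      ((hint_L n).sub (hint_V n)).const_mul h
    rw [integral_add (hint_ψ _) hint2, integral_const_mul,
      integral_sub (hint_L n) (hint_V n)] at h1
    simp only [ha, hl, hv] at h1 ⊢
    linarith
  have tel : ∑ n ∈ Finset.Icc 1 N, (a n - a (n - 1)) = a N - a 0 := by
    clear hstep hR hpoisson key hN hNpos hLHS
    induction N with
    | zero => simp
    | succ n ih =>
      rw [Finset.sum_Icc_succ_top (Nat.one_le_iff_ne_zero.mpr (Nat.succ_ne_zero n)), ih]
      simp
  have hsum : a N - a 0 = h * ((∑ n ∈ Finset.Icc 1 N, l n) - ∑ n ∈ Finset.Icc 1 N, v n)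
      + ∑ n ∈ Finset.Icc 1 N, R n := by
    rw [← tel, Finset.sum_congr rfl key, Finset.sum_add_distrib, ← Finset.mul_sum,
      Finset.sum_sub_distrib]
  have hRsum : |∑ n ∈ Finset.Icc 1 N, R n| ≤ N * (C * h ^ 2) := by
    calc |∑ n ∈ Finset.Icc 1 N, R n| ≤ ∑ n ∈ Finset.Icc 1 N, |R n| :=
          Finset.abs_sum_le_sum_abs _ _
      _ ≤ ∑ n ∈ Finset.Icc 1 N, C * h ^ 2 := Finset.sum_le_sum hR
      _ = N * (C * h ^ 2) := by rw [Finset.sum_const, Nat.card_Icc]; simp [mul_comm]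
  rw [hLHS]
  have hlval : ∑ n ∈ Finset.Icc 1 N, l n
      = ((a N - a 0) - ∑ n ∈ Finset.Icc 1 N, R n) / h + ∑ n ∈ Finset.Icc 1 N, v n := by
    field_simp
    linarith [hsum]
  rw [hlval]
  have habs : |(1 / (N:ℝ)) * (((a N - a 0) - ∑ n ∈ Finset.Icc 1 N, R n) / h
      + ∑ n ∈ Finset.Icc 1 N, v n)|
      ≤ (1 / (N:ℝ)) * ((|a N - a 0| + |∑ n ∈ Finset.Icc 1 N, R n|) / h
        + |∑ n ∈ Finset.Icc 1 N, v n|) := by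
    rw [abs_mul, abs_of_pos (by positivity : (0:ℝ) < 1 / (N:ℝ))]
    gcongr
    calc |((a N - a 0) - ∑ n ∈ Finset.Icc 1 N, R n) / h + ∑ n ∈ Finset.Icc 1 N, v n|
        ≤ |((a N - a 0) - ∑ n ∈ Finset.Icc 1 N, R n) / h| + |∑ n ∈ Finset.Icc 1 N, v n| :=
          abs_add_le _ _
      _ ≤ (|a N - a 0| + |∑ n ∈ Finset.Icc 1 N, R n|) / h + |∑ n ∈ Finset.Icc 1 N, v n| := by
          gcongr
          rw [abs_div, abs_of_pos hh]
          gcongr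
          exact abs_sub _ _
  refine habs.trans ?_
  have h1 : (1 / (N:ℝ)) * (|a N - a 0| / h) = |a N - a 0| / (N * h) := by
    field_simp
  have h2 : (1 / (N:ℝ)) * (|∑ n ∈ Finset.Icc 1 N, R n| / h) ≤ C * h := by
    calc (1 / (N:ℝ)) * (|∑ n ∈ Finset.Icc 1 N, R n| / h)
        ≤ (1 / (N:ℝ)) * (((N:ℝ) * (C * h ^ 2)) / h) := by gcongr
      _ = C * h := by field_simp
  have expand : (1 / (N:ℝ)) * ((|a N - a 0| + |∑ n ∈ Finset.Icc 1 N, R n|) / h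
      + |∑ n ∈ Finset.Icc 1 N, v n|)
      = (1 / (N:ℝ)) * (|a N - a 0| / h) + (1 / (N:ℝ)) * (|∑ n ∈ Finset.Icc 1 N, R n| / h)
        + (1 / (N:ℝ)) * |∑ n ∈ Finset.Icc 1 N, v n| := by ring
  rw [expand, h1]
  linarith [h2]
end
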